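/- arXiv:2512.02915 — 2 statements merged into one kernel-verified Lean document; each statement's English description precedes it below -/
import Mathlib

section
/- Let Z be a positive integer. Then the number of pairs (D, Y) with D a positive integer and Y a nonnegative integer satisfying Y² = D·(D+Z) is at most τ(Z²), the number of positive divisors of Z². -/
theorem stmt9 (Z : ℕ) (hZ : 0 < Z) :
    ({p : ℕ × ℕ | 0 < p.1 ∧ p.2 ^ 2 = p.1 * (p.1 + Z)}).Finite ∧
    ({p : ℕ × ℕ | 0 < p.1 ∧ p.2 ^ 2 = p.1 * (p.1 + Z)}).ncard ≤ (Z ^ 2).divisors.card := by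
  set S := {p : ℕ × ℕ | 0 < p.1 ∧ p.2 ^ 2 = p.1 * (p.1 + Z)} with hS
  set f : ℕ × ℕ → ℕ := fun p => 2 * p.1 + Z - 2 * p.2 with hf
  have key : ∀ p ∈ S, 2 * p.2 < 2 * p.1 + Z ∧ f p * (2 * p.1 + Z + 2 * p.2) = Z ^ 2 := by
    rintro ⟨D, Y⟩ hp
    obtain ⟨hD, hY⟩ := hp
    simp only at hD hY ⊢
    have hlt : 2 * Y < 2 * D + Z := by
      have h2 : (2 * Y) ^ 2 < (2 * D + Z) ^ 2 := by nlinarith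
      exact lt_of_pow_lt_pow_left₀ 2 (by positivity) h2
    refine ⟨hlt, ?_⟩
    simp only [hf]
    zify [hlt.le]
    nlinarith [hY]
  have himg : ∀ p ∈ S, f p ∈ (Z ^ 2).divisors := by
    intro p hp
    obtain ⟨hlt, heq⟩ := key p hp
    rw [Nat.mem_divisors]
    exact ⟨⟨_, heq.symm⟩, by positivity⟩
  have hinj : Set.InjOn f S := by
    rintro ⟨D1, Y1⟩ h1 ⟨D2, Y2⟩ h2 hfe
    obtain ⟨hlt1, heq1⟩ := key _ h1
    obtain ⟨hlt2, heq2⟩ := key _ h2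
    simp only [hf] at hfe heq1 heq2 hlt1 hlt2
    have hd : 0 < 2 * D1 + Z - 2 * Y1 := by omega
    have hmul : (2 * D1 + Z - 2 * Y1) * (2 * D1 + Z + 2 * Y1)
        = (2 * D1 + Z - 2 * Y1) * (2 * D2 + Z + 2 * Y2) := by
      rw [heq1, hfe, heq2]
    have h3 := Nat.eq_of_mul_eq_mul_left hd hmul
    simp only [Prod.mk.injEq]
    constructor <;> omega
  have hsub : f '' S ⊆ ((Z ^ 2).divisors : Set ℕ) := by
    rintro _ ⟨p, hp, rfl⟩; exact himg p hp
  have hfin : S.Finite :=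
    Set.Finite.of_finite_image (Set.Finite.subset (Z ^ 2).divisors.finite_toSet hsub) hinj
  refine ⟨hfin, ?_⟩
  calc S.ncard = (f '' S).ncard := (Set.ncard_image_of_injOn hinj).symm
    _ ≤ ((Z ^ 2).divisors : Set ℕ).ncard :=
        Set.ncard_le_ncard hsub (Z ^ 2).divisors.finite_toSet
    _ = (Z ^ 2).divisors.card := by simp [Set.ncard_coe_finset]
end

section
/- Let r and h be integers with 1 ≤ r ≤ h, and let K(r,h) denote the number of tuples α ∈ {1,…,h}^{2r} in which every value occurs an even number of times. Then μ_{2r}·h·(h−1)···(h−r+1) ≤ K(r,h) ≤ μ_{2r}·h^r, where μ_{2r} = (2r)!/(2^r·r!). In particular, there exists θ = θ(h,r) ∈ [0,1] such that K(r,h) = μ_{2r}·(h − θ·r)^r. -/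
/-!
Removing the last entry of a tuple together with an earlier occurrence of the same value
(the inverse of `insertPair`) maps every tuple of length `n + 2` with even multiplicities onto
one of length `n`, with `n + 1` choices for the position and `h` for the value; hence
`K(r + 1, h) ≤ (2r + 1) h K(r, h)`, and `μ_{2r + 2} = (2r + 1) μ_{2r}` gives
`K(r, h) ≤ μ_{2r} h^r`.
Conversely, inserting a pair of a value that does not yet occur is injective on tuples in which
every value occurs zero or two times, and such a tuple of length `2r` leaves `h - r` unused
values; this gives `μ_{2r} h(h - 1)⋯(h - r + 1) ≤ K(r, h)`. Since `(h - r)^r` is at most the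
falling factorial, `θ` comes from the intermediate value theorem.
-/

open scoped Classical

noncomputable section

/-- `μ_{2r} = (2r)!/(2^r r!)`, the `2r`-th moment of a standard Gaussian. -/
def mu (r : ℕ) : ℝ := (Nat.factorial (2 * r) : ℝ) / (2 ^ r * Nat.factorial r)

/-- `K r h`: the number of tuples `α ∈ {1,…,h}^{2r}` in which every value occurs
an even number of times. -/
def K (r h : ℕ) : ℕ :=
  (Finset.univ.filter (fun α : Fin (2 * r) → Fin h =>
    ∀ v : Fin h, Even ((Finset.univ.filter fun i => α i = v).card))).card

open Finset

lemma mu_zero : mu 0 = 1 := by simp [mu]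

lemma mu_succ (r : ℕ) : mu (r + 1) = (2 * r + 1) * mu r := by
  simp only [mu, show 2 * (r + 1) = 2 * r + 1 + 1 by ring, Nat.factorial_succ, pow_succ]
  push_cast
  field_simp
  ring

lemma mu_nonneg (r : ℕ) : 0 ≤ mu r := by unfold mu; positivity

section Tuples

variable {α : Type*} {n : ℕ}

def insertPair (j : Fin (n + 1)) (a : α) (f : Fin n → α) : Fin (n + 2) → α :=
  Fin.snoc (j.insertNth a f) a

lemma insertPair_removeNth_init {f : Fin (n + 2) → α} {j : Fin (n + 1)}
    (hj : Fin.init f j = f (Fin.last _)) :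
    insertPair j (f (Fin.last _)) (j.removeNth (Fin.init f)) = f := by
  rw [insertPair, ← hj, Fin.insertNth_self_removeNth, hj, Fin.snoc_init_self]

variable [DecidableEq α]

def occurrences (f : Fin n → α) (a : α) : ℕ := #{i | f i = a}

lemma occurrences_eq_zero_iff {f : Fin n → α} {a : α} :
    occurrences f a = 0 ↔ ∀ i, f i ≠ a := by
  simp [occurrences, filter_eq_empty_iff]

lemma sum_occurrences [Fintype α] (f : Fin n → α) : ∑ a, occurrences f a = n := by
  simp only [occurrences]
  simpa using (card_eq_sum_card_fiberwise (s := univ) (t := univ) (f := f) (by simp)).symm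

lemma occurrences_eq_removeNth_add (f : Fin (n + 1) → α) (p : Fin (n + 1)) (a : α) :
    occurrences f a = occurrences (p.removeNth f) a + if f p = a then 1 else 0 := by
  simp only [occurrences, card_filter]
  rw [Fin.sum_univ_succAbove _ p, add_comm]
  rfl

lemma occurrences_insertPair (j : Fin (n + 1)) (a : α) (f : Fin n → α) (b : α) :
    occurrences (insertPair j a f) b = occurrences f b + if a = b then 2 else 0 := by
  rw [insertPair, occurrences_eq_removeNth_add _ (Fin.last _), Fin.removeNth_last, Fin.init_snoc,
    Fin.snoc_last, occurrences_eq_removeNth_add _ j, Fin.removeNth_insertNth,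
    Fin.insertNth_apply_same]
  split <;> omega

lemma insertPair_injOn :
    Set.InjOn (fun x : Fin (n + 1) × α × (Fin n → α) => insertPair x.1 x.2.1 x.2.2)
      {x | occurrences x.2.2 x.2.1 = 0} := by
  rintro ⟨j, a, f⟩ hf ⟨j', a', f'⟩ - heq
  rw [Set.mem_ofPred_eq, occurrences_eq_zero_iff] at hf
  have ha : a = a' := by simpa [insertPair] using congrFun heq (Fin.last _)
  subst ha
  have hins : (j.insertNth a f : Fin (n + 1) → α) = j'.insertNth a f' := by
    simpa [insertPair] using congrArg Fin.init heq
  have hj : j = j' := by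
    by_contra hne
    obtain ⟨k, hk⟩ := Fin.exists_succAbove_eq (Ne.symm hne)
    apply hf k
    calc f k = (j.insertNth a f : Fin (n + 1) → α) (j.succAbove k) := by simp
      _ = a := by rw [hk, hins, Fin.insertNth_apply_same]
  subst hj
  rw [(Fin.insertNth_injective2 hins).2]

end Tuples

section Counting

variable (α : Type*) [DecidableEq α] [Fintype α]

def evenTuples (n : ℕ) : Finset (Fin n → α) := {f | ∀ a, Even (occurrences f a)}

def pairTuples (n : ℕ) : Finset (Fin n → α) :=
  {f | ∀ a, occurrences f a = 0 ∨ occurrences f a = 2}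

variable {α}

lemma pairTuples_subset_evenTuples (n : ℕ) : pairTuples α n ⊆ evenTuples α n := by
  intro f hf
  simp only [pairTuples, evenTuples, mem_filter_univ] at hf ⊢
  intro a
  rcases hf a with h | h <;> simp [h]

lemma insertPair_mem_evenTuples_iff {n : ℕ} {j : Fin (n + 1)} {a : α} {f : Fin n → α} :
    insertPair j a f ∈ evenTuples α (n + 2) ↔ f ∈ evenTuples α n := by
  simp only [evenTuples, mem_filter_univ, occurrences_insertPair]
  refine forall_congr' fun b => ?_
  split <;> simp [Nat.even_add]

lemma exists_init_eq_last_of_mem_evenTuples {n : ℕ} {f : Fin (n + 2) → α}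
    (hf : f ∈ evenTuples α (n + 2)) :
    ∃ j, Fin.init f j = f (Fin.last _) := by
  by_contra! hne
  have hlast := (mem_filter_univ _).1 hf (f (Fin.last _))
  rw [occurrences_eq_removeNth_add _ (Fin.last _), Fin.removeNth_last,
    occurrences_eq_zero_iff.2 hne, if_pos rfl] at hlast
  exact Nat.not_even_one hlast

lemma card_evenTuples_add_two_le (n : ℕ) :
    #(evenTuples α (n + 2)) ≤ (n + 1) * Fintype.card α * #(evenTuples α n) := by
  calc #(evenTuples α (n + 2))
      ≤ #((univ ×ˢ univ ×ˢ evenTuples α n).image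
          fun x : Fin (n + 1) × α × (Fin n → α) => insertPair x.1 x.2.1 x.2.2) := by
        refine card_le_card fun f hf => ?_
        obtain ⟨j, hj⟩ := exists_init_eq_last_of_mem_evenTuples hf
        have hrec := insertPair_removeNth_init hj
        rw [← hrec, insertPair_mem_evenTuples_iff] at hf
        exact mem_image.2
          ⟨(j, _, _), mem_product.2 ⟨mem_univ _, mem_product.2 ⟨mem_univ _, hf⟩⟩, hrec⟩
    _ ≤ #(univ ×ˢ univ ×ˢ evenTuples α n) := card_image_le
    _ = (n + 1) * Fintype.card α * #(evenTuples α n) := by simp [mul_assoc]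

lemma card_filter_occurrences_eq_zero {r : ℕ} {f : Fin (2 * r) → α}
    (hf : f ∈ pairTuples α (2 * r)) : #{a | occurrences f a = 0} = Fintype.card α - r := by
  have hpair := (mem_filter_univ _).1 hf
  have hused : 2 * #{a | occurrences f a ≠ 0} = 2 * r := calc
    2 * #{a | occurrences f a ≠ 0} = ∑ a with occurrences f a ≠ 0, occurrences f a := by
      rw [mul_comm, ← smul_eq_mul, ← sum_const]
      exact sum_congr rfl fun a ha => ((hpair a).resolve_left (mem_filter.1 ha).2).symm
    _ = 2 * r := by rw [sum_filter_ne_zero, sum_occurrences]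
  have := card_filter_add_card_filter_not (s := univ) fun a => occurrences f a = 0
  simp only [card_univ, ← ne_eq] at this
  omega

lemma le_card_pairTuples_add_two (r : ℕ) :
    (2 * r + 1) * (Fintype.card α - r) * #(pairTuples α (2 * r)) ≤
      #(pairTuples α (2 * r + 2)) := by
  set S := (univ : Finset (Fin (2 * r + 1))) ×ˢ
    ((univ : Finset α) ×ˢ pairTuples α (2 * r)).filter fun x => occurrences x.2 x.1 = 0
  have hS : #S = (2 * r + 1) * ((Fintype.card α - r) * #(pairTuples α (2 * r))) := by
    rw [card_product, card_univ, Fintype.card_fin]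
    congr 1
    calc #{x ∈ univ ×ˢ pairTuples α (2 * r) | occurrences x.2 x.1 = 0}
        = ∑ f ∈ pairTuples α (2 * r), #{a | occurrences f a = 0} := by
          simp only [card_filter, sum_product_right]
      _ = ∑ f ∈ pairTuples α (2 * r), (Fintype.card α - r) :=
          sum_congr rfl fun f hf => card_filter_occurrences_eq_zero hf
      _ = (Fintype.card α - r) * #(pairTuples α (2 * r)) := by
          rw [sum_const, smul_eq_mul, mul_comm]
  rw [mul_assoc, ← hS]
  refine card_le_card_of_injOn _ (fun x hx => ?_) (insertPair_injOn.mono fun x hx => ?_)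
  · obtain ⟨-, hx⟩ := mem_product.1 hx
    obtain ⟨hx, hzero⟩ := mem_filter.1 hx
    have hpair := (mem_filter_univ _).1 (mem_product.1 hx).2
    refine (mem_filter_univ _).2 fun b => ?_
    rw [occurrences_insertPair]
    split_ifs with hb
    · simp [← hb, hzero]
    · simpa using hpair b
  · exact (mem_filter.1 (mem_product.1 hx).2).2

variable (α)

lemma card_evenTuples_le_mu_mul_pow (r : ℕ) :
    (#(evenTuples α (2 * r)) : ℝ) ≤ mu r * Fintype.card α ^ r := by
  induction r with
  | zero => simpa [mu_zero] using card_le_univ (evenTuples α 0)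
  | succ r ih =>
    calc (#(evenTuples α (2 * r + 2)) : ℝ)
        ≤ (2 * r + 1) * Fintype.card α * #(evenTuples α (2 * r)) := by
          exact_mod_cast card_evenTuples_add_two_le (2 * r)
      _ ≤ (2 * r + 1) * Fintype.card α * (mu r * Fintype.card α ^ r) := by gcongr
      _ = mu (r + 1) * Fintype.card α ^ (r + 1) := by rw [mu_succ]; ring

lemma mu_mul_descFactorial_le_card_pairTuples (r : ℕ) :
    mu r * (Fintype.card α).descFactorial r ≤ #(pairTuples α (2 * r)) := by
  induction r with
  | zero => simp [mu_zero, pairTuples, occurrences]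
  | succ r ih =>
    calc mu (r + 1) * (Fintype.card α).descFactorial (r + 1)
        = (2 * r + 1) * (Fintype.card α - r : ℕ) *
            (mu r * (Fintype.card α).descFactorial r) := by
          rw [mu_succ, Nat.descFactorial_succ]; push_cast; ring
      _ ≤ (2 * r + 1) * (Fintype.card α - r : ℕ) * #(pairTuples α (2 * r)) := by gcongr
      _ ≤ #(pairTuples α (2 * r + 2)) := by exact_mod_cast le_card_pairTuples_add_two r

end Counting

lemma exists_mem_Icc_eq_mul_sub_mul_pow {c x y z : ℝ} (n : ℕ) (hlo : c * (x - y) ^ n ≤ z)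
    (hhi : z ≤ c * x ^ n) : ∃ θ ∈ Set.Icc (0 : ℝ) 1, z = c * (x - θ * y) ^ n := by
  obtain ⟨θ, hθ, hz⟩ := intermediate_value_Icc' zero_le_one
    (f := fun θ : ℝ => c * (x - θ * y) ^ n) (by fun_prop) (by simpa using And.intro hlo hhi)
  exact ⟨θ, hθ, hz.symm⟩

theorem stmt10_general (r h : ℕ) (hrh : r ≤ h) :
    mu r * ∏ i ∈ Finset.range r, ((h : ℝ) - i) ≤ (K r h : ℝ) ∧
    (K r h : ℝ) ≤ mu r * (h : ℝ) ^ r ∧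
    ∃ θ ∈ Set.Icc (0 : ℝ) 1, (K r h : ℝ) = mu r * ((h : ℝ) - θ * r) ^ r := by
  -- not `rfl`: `K` decides its `∀ v : Fin h` with `Nat.decidableForallFin`
  have hK : K r h = #(evenTuples (Fin h) (2 * r)) := by
    unfold K evenTuples occurrences
    congr
  have hprod : ∏ i ∈ range r, ((h : ℝ) - i) = h.descFactorial r := by
    rw [Nat.descFactorial_eq_prod_range, Nat.cast_prod]
    exact prod_congr rfl fun i hi => (Nat.cast_sub (by grind)).symm
  have hlower : mu r * ∏ i ∈ range r, ((h : ℝ) - i) ≤ K r h := calc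
    _ ≤ (#(pairTuples (Fin h) (2 * r)) : ℝ) := by
      simpa [hprod] using mu_mul_descFactorial_le_card_pairTuples (Fin h) r
    _ ≤ K r h := by exact_mod_cast hK ▸ card_le_card (pairTuples_subset_evenTuples _)
  have hupper : (K r h : ℝ) ≤ mu r * h ^ r := by
    simpa [hK] using card_evenTuples_le_mu_mul_pow (Fin h) r
  have hpow : ((h : ℝ) - r) ^ r ≤ ∏ i ∈ range r, ((h : ℝ) - i) := by
    rw [hprod, ← Nat.cast_sub hrh]
    exact_mod_cast (Nat.pow_le_pow_left (by omega) r).trans (Nat.pow_sub_le_descFactorial h r)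
  exact ⟨hlower, hupper, exists_mem_Icc_eq_mul_sub_mul_pow r
    ((mul_le_mul_of_nonneg_left hpow (mu_nonneg r)).trans hlower) hupper⟩

theorem stmt10 (r h : ℕ) (hr : 1 ≤ r) (hrh : r ≤ h) :
    mu r * ∏ i ∈ Finset.range r, ((h : ℝ) - i) ≤ (K r h : ℝ) ∧
    (K r h : ℝ) ≤ mu r * (h : ℝ) ^ r ∧
    ∃ θ ∈ Set.Icc (0 : ℝ) 1, (K r h : ℝ) = mu r * ((h : ℝ) - θ * r) ^ r :=
  stmt10_general r h hrh
end
end
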